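/- arXiv:1611.05161 — 2 statements merged into one kernel-verified Lean document; each statement's English description precedes it below -/
import Mathlib

section
/- If nonempty words a₁, a₂ have no common divider (no word S and positive n, r with a₁ = S^n and a₂ = S^r), then the words a₁ ++ a₁ ++ a₂ and a₁ ++ a₂ ++ a₁ are distinct. -/
/-- `wpow S n` : concatenation of `n` copies of `S`. -/
def wpow {α : Type*} (S : List α) (n : ℕ) : List α := (List.replicate n S).flatten

lemma wpow_zero {α : Type*} (S : List α) : wpow S 0 = [] := rfl

lemma wpow_one {α : Type*} (S : List α) : wpow S 1 = S := by
  simp [wpow]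

lemma wpow_add {α : Type*} (S : List α) (k m : ℕ) :
    wpow S (k + m) = wpow S k ++ wpow S m := by
  simp only [wpow, List.replicate_add, List.flatten_append]

lemma comm_wpow {α : Type*} : ∀ (n : ℕ) (x y : List α),
    x.length + y.length ≤ n → x ++ y = y ++ x →
    ∃ S k m, x = wpow S k ∧ y = wpow S m := by
  intro n
  induction n with
  | zero =>
    intro x y hlen _
    have hx : x = [] := by
      cases x with
      | nil => rfl
      | cons a l => simp at hlen
    have hy : y = [] := by
      cases y with
      | nil => rfl
      | cons a l => simp at hlen
    exact ⟨[], 0, 0, by simp [hx, wpow_zero], by simp [hy, wpow_zero]⟩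
  | succ n ih =>
    intro x y hlen h
    by_cases hx : x = []
    · exact ⟨y, 0, 1, by simp [hx, wpow_zero], by simp [wpow_one]⟩
    by_cases hy : y = []
    · exact ⟨x, 1, 0, by simp [wpow_one], by simp [hy, wpow_zero]⟩
    rcases le_or_gt x.length y.length with hle | hlt
    · -- x is a prefix of y
      have hpx : x <+: y := by
        refine List.prefix_of_prefix_length_le (l₃ := y ++ x) ?_ ?_ hle
        · rw [← h]; exact List.prefix_append x y
        · exact List.prefix_append y x
      obtain ⟨z, hz⟩ := hpx
      subst hz
      have h' : x ++ z = z ++ x := by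
        have : x ++ (x ++ z) = x ++ (z ++ x) := by
          simpa [List.append_assoc] using h
        exact List.append_cancel_left this
      have hxpos : 1 ≤ x.length := by
        cases x with
        | nil => exact absurd rfl hx
        | cons a l => simp
      have hlen' : x.length + z.length ≤ n := by
        simp [List.length_append] at hlen
        omega
      obtain ⟨S, k, m, hxS, hzS⟩ := ih x z hlen' h'
      exact ⟨S, k, k + m, hxS, by rw [wpow_add, hxS, hzS]⟩
    · -- y is a prefix of x
      have hpy : y <+: x := by
        refine List.prefix_of_prefix_length_le (l₃ := y ++ x) ?_ ?_ (le_of_lt hlt)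
        · exact List.prefix_append y x
        · rw [← h]; exact List.prefix_append x y
      obtain ⟨z, hz⟩ := hpy
      subst hz
      have h' : y ++ z = z ++ y := by
        have : y ++ (z ++ y) = y ++ (y ++ z) := by
          simpa [List.append_assoc] using h
        exact (List.append_cancel_left this).symm
      have hypos : 1 ≤ y.length := by
        cases y with
        | nil => exact absurd rfl hy
        | cons a l => simp
      have hlen' : y.length + z.length ≤ n := by
        simp [List.length_append] at hlen
        omega
      obtain ⟨S, k, m, hyS, hzS⟩ := ih y z hlen' h'
      exact ⟨S, k + m, k, by rw [wpow_add, hyS, hzS], hyS⟩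

/-- Contrapositive direction of the Common Divider Lemma: without a common
divider, the two compositions are distinct words. -/
theorem no_common_divider_ne {α : Type*} (a₁ a₂ : List α)
    (h₁ : a₁ ≠ []) (h₂ : a₂ ≠ []) (hlen : a₁.length < a₂.length)
    (hnd : ¬ ∃ (S : List α) (n r : ℕ), 0 < n ∧ 0 < r ∧
        a₁ = wpow S n ∧ a₂ = wpow S r) :
    a₁ ++ a₁ ++ a₂ ≠ a₁ ++ a₂ ++ a₁ := by
  intro h
  have hcomm : a₁ ++ a₂ = a₂ ++ a₁ := by
    have : a₁ ++ (a₁ ++ a₂) = a₁ ++ (a₂ ++ a₁) := by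
      simpa [List.append_assoc] using h
    exact List.append_cancel_left this
  obtain ⟨S, k, m, hk, hm⟩ :=
    comm_wpow (a₁.length + a₂.length) a₁ a₂ le_rfl hcomm
  apply hnd
  refine ⟨S, k, m, ?_, ?_, hk, hm⟩
  · rcases Nat.eq_zero_or_pos k with rfl | hpos
    · exact absurd hk (by simpa [wpow_zero] using h₁)
    · exact hpos
  · rcases Nat.eq_zero_or_pos m with rfl | hpos
    · exact absurd hm (by simpa [wpow_zero] using h₂)
    · exact hpos
end

section
/- If an incremental binary sequence M contains a subword consisting of both 0's and 1's at positions [i,j], then there is a position x' > j such that for every x'' > x', the subword M[j,x''] contains a run of more than 2(j−i) consecutive 1's, and hence M[i,j] and M[j,x''] share no common divider word. -/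
/-- `Block M x s ℓ` : `ℓ` consecutive values of `M` equal to `x`, starting at `s`. -/
def Block (M : ℕ → Bool) (x : Bool) (s ℓ : ℕ) : Prop := ∀ k < ℓ, M (s + k) = x

/-- `M` is incremental. -/
def Incremental (M : ℕ → Bool) : Prop :=
  ∀ x s ℓ, 0 < ℓ → Block M x s ℓ →
    ∃ ℓ' > ℓ, ∃ j, j > s + ℓ ∧ Block M (!x) j ℓ'

/-- `word M a b` : the finite word of entries of `M` at positions `a, …, b-1`. -/
def word (M : ℕ → Bool) (a b : ℕ) : List Bool :=
  (List.range (b - a)).map (fun k => M (a + k))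

lemma wpow_length {α : Type*} (S : List α) (k : ℕ) : (wpow S k).length = k * S.length := by
  induction k with
  | zero => simp [wpow]
  | succ k ih =>
    simp [wpow, List.replicate_succ] at ih ⊢
    rw [Nat.succ_mul]; omega

lemma word_length (M : ℕ → Bool) (a b : ℕ) : (word M a b).length = b - a := by
  simp [word]

lemma word_getElem (M : ℕ → Bool) (a b q : ℕ) (h : q < (word M a b).length) :
    (word M a b)[q] = M (a + q) := by
  simp [word]

lemma wpow_getElem {α : Type*} (S : List α) (hS : 0 < S.length) (k q : ℕ)
    (hq : q < (wpow S k).length) :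
    (wpow S k)[q] = S[q % S.length]'(Nat.mod_lt _ hS) := by
  induction k generalizing q with
  | zero => simp [wpow] at hq
  | succ k ih =>
    have he : wpow S (k+1) = S ++ wpow S k := by
      simp [wpow, List.replicate_succ]
    have hq' : q < (S ++ wpow S k).length := by rw [← he]; exact hq
    rw [List.getElem_of_eq he hq]
    by_cases hc : q < S.length
    · rw [List.getElem_append_left hc]
      congr 1
      exact (Nat.mod_eq_of_lt hc).symm
    · push_neg at hc
      rw [List.getElem_append_right (by omega)]
      have hlt : q - S.length < (wpow S k).length := by
        simp [List.length_append] at hq'; omega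
      rw [ih _ hlt]
      congr 1
      exact (Nat.mod_eq_sub_mod hc).symm

lemma mem_of_mem_wpow {α : Type*} {a : α} {S : List α} {n : ℕ} (h : a ∈ wpow S n) : a ∈ S := by
  rcases List.mem_flatten.mp h with ⟨l, hl, hal⟩
  rwa [List.eq_of_mem_replicate hl] at hal

lemma block_step (M : ℕ → Bool) (hM : Incremental M) (s ℓ : ℕ) (hℓ : 0 < ℓ)
    (hb : Block M true s ℓ) : ∃ s' ℓ', s < s' ∧ ℓ < ℓ' ∧ Block M true s' ℓ' := by
  obtain ⟨ℓ₁, hℓ₁, j₁, hj₁, hb₁⟩ := hM true s ℓ hℓ hb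
  obtain ⟨ℓ₂, hℓ₂, j₂, hj₂, hb₂⟩ := hM false j₁ ℓ₁ (by omega) (by simpa using hb₁)
  exact ⟨j₂, ℓ₂, by omega, by omega, by simpa using hb₂⟩

lemma big_block (M : ℕ → Bool) (hM : Incremental M) (t : ℕ) (ht : M t = true) :
    ∀ m, ∃ s ℓ, m < s ∧ m < ℓ ∧ Block M true s ℓ := by
  have base : Block M true t 1 := by
    intro k hk; interval_cases k; simpa using ht
  intro m
  induction m with
  | zero =>
    obtain ⟨s, ℓ, hs, hℓ, hb⟩ := block_step M hM t 1 one_pos base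
    exact ⟨s, ℓ, by omega, by omega, hb⟩
  | succ m ih =>
    obtain ⟨s, ℓ, hs, hℓ, hb⟩ := ih
    obtain ⟨s', ℓ', hs', hℓ', hb'⟩ := block_step M hM s ℓ (by omega) hb
    exact ⟨s', ℓ', by omega, by omega, hb'⟩

/-- Key case of Lemma 20: if `M[i,j]` contains both a 0 and a 1, then from some
point `x'` on, every subword `M[j,x'']` contains a run of more than `2(j-i)`
consecutive 1's, and hence `M[i,j]` and `M[j,x'']` share no common divider. -/
theorem mixed_subword_no_common_divider (M : ℕ → Bool) (hM : Incremental M)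
    (i j : ℕ) (hij : i < j)
    (h0 : false ∈ word M i j) (h1 : true ∈ word M i j) :
    ∃ x' > j, ∀ x'' > x',
      (∃ s, j ≤ s ∧ s + (2 * (j - i) + 1) ≤ x'' ∧ Block M true s (2 * (j - i) + 1)) ∧
      ¬ ∃ (S : List Bool) (n k : ℕ), 0 < n ∧ 0 < k ∧
          word M i j = wpow S n ∧ word M j x'' = wpow S k := by
  set L := 2 * (j - i) + 1 with hL
  -- find a true entry
  obtain ⟨q₁, hq₁, hMq₁⟩ := List.mem_iff_getElem.mp h1
  rw [word_getElem] at hMq₁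
  obtain ⟨s, ℓ, hs, hℓ, hb⟩ := big_block M hM (i + q₁) hMq₁ (j + L)
  have hbL : Block M true s L := fun k hk => hb k (by omega)
  refine ⟨s + L, by omega, fun x'' hx'' => ?_⟩
  constructor
  · exact ⟨s, by omega, by omega, hbL⟩
  · rintro ⟨S, n, k, hn, hk, hu, hv⟩
    set d := S.length with hd
    have hlen1 : j - i = n * d := by
      have := congrArg List.length hu
      rwa [word_length, wpow_length] at this
    have hdpos : 0 < d := by
      rcases Nat.eq_zero_or_pos d with h | h
      · rw [h, Nat.mul_zero] at hlen1; omega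
      · exact h
    have hdle : d ≤ j - i := by
      have : 1 * d ≤ n * d := Nat.mul_le_mul_right d hn
      omega
    -- false in S
    have hfS : false ∈ S := mem_of_mem_wpow (hu ▸ h0)
    obtain ⟨p, hp, hSp⟩ := List.mem_iff_getElem.mp hfS
    -- evaluate word M j x'' via wpow
    have hlen2 : x'' - j = k * d := by
      have := congrArg List.length hv
      rwa [word_length, wpow_length] at this
    have heval : ∀ q (hq : q < x'' - j), M (j + q) = S[q % d]'(Nat.mod_lt _ hdpos) := by
      intro q hq
      have hq' : q < (word M j x'').length := by rwa [word_length]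
      have := List.getElem_of_eq hv hq'
      rw [word_getElem] at this
      rw [this, wpow_getElem S hdpos]
    -- choose an index in the true run hitting residue p
    set q₀ := s - j with hq₀
    set t := (p + d - q₀ % d) % d with htdef
    have hrlt : q₀ % d < d := Nat.mod_lt _ hdpos
    have htlt : t < d := Nat.mod_lt _ hdpos
    have hmod : (q₀ + t) % d = p := by
      have h1' : (q₀ + t) % d = (q₀ + (p + d - q₀ % d)) % d := by
        rw [htdef, Nat.add_mod_mod]
      have h2' : q₀ + (p + d - q₀ % d) = d * (q₀ / d) + (p + d) := by
        have := Nat.mod_add_div q₀ d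
        omega
      rw [h1', h2', Nat.mul_add_mod, Nat.add_mod_right]
      exact Nat.mod_eq_of_lt hp
    have hqlt : q₀ + t < x'' - j := by omega
    have h3 := heval (q₀ + t) hqlt
    have h4 : M (j + (q₀ + t)) = true := by
      have := hbL t (by omega)
      have he : j + (q₀ + t) = s + t := by omega
      rwa [he]
    have h5 : S[(q₀ + t) % d]'(Nat.mod_lt _ hdpos) = false := by
      rw [← hSp]; congr 1
    rw [h4, h5] at h3
    exact Bool.noConfusion h3
end
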